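/- arXiv:1801.02496 — 6 statements merged into one kernel-verified Lean document; each statement's English description precedes it below -/
import Mathlib

section
/- Let Y be a random variable taking values y₁,...,y_k with probabilities p₁ ≥ p₂ ≥ ... ≥ p_k > 0 summing to 1, and assign to y_i a binary codeword length ℓ(y_i) = ⌊log₂ i⌋ (the length of the i-th shortest binary string including the empty string). Then for every t > 0, (1/t)·log₂ E[2^{t·ℓ(Y)}] ≤ ((1+t)/t)·log₂ ∑_{j=1}^k p_j^{1/(1+t)}, i.e., the normalized cumulant generating function of codeword lengths is at most the Rényi entropy of Y of order 1/(1+t). -/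
open Real Finset

/-!
With `α = 1/(1+t)` and `S = ∑ j, p j ^ α`, monotonicity of `p` gives `(i+1) · p i ^ α ≤ S`,
and the `i`-th codeword has `2 ^ ℓ(i) ≤ i + 1`. Hence
`p i · 2 ^ (t ℓ(i)) ≤ p i · (S · p i ^ (-α)) ^ t = S ^ t · p i ^ α`, since `1 - α t = α`.
Summing over `i` gives `E[2 ^ (t ℓ(Y))] ≤ S ^ (1 + t)`; take `logb 2` and divide by `t`.
-/

theorem succ_mul_le_sum_of_antitone {k : ℕ} {f : Fin k → ℝ} (hf : Antitone f)
    (hf0 : ∀ i, 0 ≤ f i) (i : Fin k) : ((i : ℕ) + 1 : ℝ) * f i ≤ ∑ j, f j :=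
  calc ((i : ℕ) + 1 : ℝ) * f i = ∑ _j ∈ Iic i, f i := by simp
    _ ≤ ∑ j ∈ Iic i, f j := sum_le_sum fun j hj => hf (mem_Iic.mp hj)
    _ ≤ ∑ j, f j := sum_le_sum_of_subset_of_nonneg (subset_univ _) fun j _ _ => hf0 j

theorem rpow_mul_natLog_le (b : ℕ) {n : ℕ} (hn : n ≠ 0) {t : ℝ} (ht : 0 ≤ t) :
    (b : ℝ) ^ (t * Nat.log b n) ≤ (n : ℝ) ^ t := by
  rw [mul_comm, rpow_mul (Nat.cast_nonneg b), rpow_natCast]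
  exact rpow_le_rpow (by positivity) (by exact_mod_cast Nat.pow_log_le_self b hn) ht

theorem mul_rpow_le_of_mul_rpow_le {p x S t : ℝ} (hp : 0 ≤ p) (hx : 0 ≤ x) (ht : 0 ≤ t)
    (h : x * p ^ (1 / (1 + t)) ≤ S) : p * x ^ t ≤ S ^ t * p ^ (1 / (1 + t)) := by
  have hpα : 0 ≤ p ^ (1 / (1 + t)) := rpow_nonneg hp _
  have hsplit : p = p ^ (1 / (1 + t)) * (p ^ (1 / (1 + t))) ^ t := by
    rw [← rpow_mul hp, ← rpow_add' hp (by positivity)]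
    field_simp
    rw [rpow_one]
  calc p * x ^ t = p ^ (1 / (1 + t)) * (x * p ^ (1 / (1 + t))) ^ t := by
        rw [mul_rpow hx hpα]; nth_rewrite 1 [hsplit]; ring
    _ ≤ p ^ (1 / (1 + t)) * S ^ t := by gcongr
    _ = S ^ t * p ^ (1 / (1 + t)) := mul_comm _ _

theorem sum_mul_two_rpow_natLog_le {k : ℕ} {p : Fin k → ℝ} (hp : ∀ i, 0 ≤ p i)
    (hmono : Antitone p) {t : ℝ} (ht : 0 ≤ t) :
    ∑ i, p i * (2 : ℝ) ^ (t * (Nat.log 2 ((i : ℕ) + 1) : ℝ))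
      ≤ (∑ j, p j ^ (1 / (1 + t))) ^ (1 + t) := by
  set S := ∑ j, p j ^ (1 / (1 + t))
  have hS : 0 ≤ S := sum_nonneg fun j _ => rpow_nonneg (hp j) _
  have hmonoα : Antitone fun j => p j ^ (1 / (1 + t)) := fun i j hij =>
    rpow_le_rpow (hp j) (hmono hij) (by positivity)
  calc ∑ i, p i * (2 : ℝ) ^ (t * (Nat.log 2 ((i : ℕ) + 1) : ℝ))
      ≤ ∑ i : Fin k, p i * ((i : ℕ) + 1 : ℝ) ^ t := by
        refine sum_le_sum fun i _ => mul_le_mul_of_nonneg_left ?_ (hp i)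
        exact_mod_cast rpow_mul_natLog_le 2 (Nat.succ_ne_zero i) ht
    _ ≤ ∑ i, S ^ t * p i ^ (1 / (1 + t)) := by
        refine sum_le_sum fun i _ => ?_
        exact mul_rpow_le_of_mul_rpow_le (hp i) (by positivity) ht
          (succ_mul_le_sum_of_antitone hmonoα (fun j => rpow_nonneg (hp j) _) i)
    _ = S ^ (1 + t) := by rw [← mul_sum, rpow_add' hS (by positivity), rpow_one, mul_comm]

theorem cgf_le_renyi_entropy_general {k : ℕ} (p : Fin k → ℝ)
    (hpos : ∀ i, 0 < p i) (hmono : ∀ i j : Fin k, i ≤ j → p j ≤ p i)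
    (t : ℝ) (ht : 0 < t) :
    (1 / t) * Real.logb 2 (∑ i, p i * (2 : ℝ) ^ (t * (Nat.log 2 ((i : ℕ) + 1) : ℝ)))
      ≤ ((1 + t) / t) * Real.logb 2 (∑ j, p j ^ (1 / (1 + t))) := by
  rcases k.eq_zero_or_pos with rfl | hk
  · simp
  have hE : 0 < ∑ i, p i * (2 : ℝ) ^ (t * (Nat.log 2 ((i : ℕ) + 1) : ℝ)) :=
    sum_pos (fun i _ => mul_pos (hpos i) (rpow_pos_of_pos two_pos _)) ⟨⟨0, hk⟩, mem_univ _⟩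
  have hS : 0 < ∑ j, p j ^ (1 / (1 + t)) :=
    sum_pos (fun j _ => rpow_pos_of_pos (hpos j) _) ⟨⟨0, hk⟩, mem_univ _⟩
  calc (1 / t) * logb 2 (∑ i, p i * (2 : ℝ) ^ (t * (Nat.log 2 ((i : ℕ) + 1) : ℝ)))
      ≤ (1 / t) * logb 2 ((∑ j, p j ^ (1 / (1 + t))) ^ (1 + t)) := by
        gcongr
        · norm_num
        exact sum_mul_two_rpow_natLog_le (fun i => (hpos i).le) hmono ht.le
    _ = ((1 + t) / t) * logb 2 (∑ j, p j ^ (1 / (1 + t))) := by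
        rw [logb_rpow_eq_mul_logb_of_pos hS]; ring

/-- Let `Y` take values `y₁,...,y_k` with probabilities
`p 0 ≥ p 1 ≥ ... ≥ p (k-1) > 0` summing to 1, and let the codeword of the `i`-th
value be the `i`-th shortest binary string, of length `⌊log₂ i⌋` (here
`Nat.log 2 (i+1)` for the 0-based index `i`). Then for every `t > 0`,
`(1/t)·log₂ E[2^{t·ℓ(Y)}] ≤ ((1+t)/t)·log₂ ∑ j, p j^(1/(1+t))`,
i.e. the normalized cumulant generating function of codeword lengths is at most
the Rényi entropy of order `1/(1+t)`. -/
theorem cgf_le_renyi_entropy {k : ℕ} (p : Fin k → ℝ)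
    (hpos : ∀ i, 0 < p i) (hmono : ∀ i j : Fin k, i ≤ j → p j ≤ p i)
    (hsum : ∑ i, p i = 1) (t : ℝ) (ht : 0 < t) :
    (1 / t) * Real.logb 2 (∑ i, p i * (2 : ℝ) ^ (t * (Nat.log 2 ((i : ℕ) + 1) : ℝ)))
      ≤ ((1 + t) / t) * Real.logb 2 (∑ j, p j ^ (1 / (1 + t))) :=
  cgf_le_renyi_entropy_general p hpos hmono t ht
end

section
/- Let Y be a random variable on a finite set with distribution P_Y, supported on a set S, and let ℓ : S → ℕ be arbitrary. Then for every t > 0, (1/t)·log₂ E[2^{t·ℓ(Y)}] ≥ H_{1/(1+t)}(Y) − log₂ ∑_{y∈S} 2^{−ℓ(y)}, where H_α(Y) = (1/(1−α))·log₂ ∑_y P_Y(y)^α is the Rényi entropy of order α. -/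
open Real Finset

/-! Hölder's inequality with exponents `1 + t` and `(1 + t) / t`, applied to
`p y ^ (1/(1+t)) = (p y · 2^{t ℓ y})^{1/(1+t)} · (2^{-ℓ y})^{t/(1+t)}`, bounds the Rényi sum
`∑ p y ^ (1/(1+t))` by the moment `∑ p y · 2^{t ℓ y}` and the Kraft sum `∑ 2^{-ℓ y}`;
taking `logb 2` gives the theorem. -/

lemma sum_rpow_one_div_one_add_le_kraft_mul_moment {ι : Type*} (s : Finset ι) {p x : ι → ℝ}
    (hp : ∀ i, 0 ≤ p i) {b t : ℝ} (hb : 0 < b) (ht : 0 ≤ t) :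
    ∑ i ∈ s, p i ^ (1 / (1 + t))
      ≤ (∑ i ∈ s, b ^ (-x i)) ^ (t / (1 + t))
        * (∑ i ∈ s, p i * b ^ (t * x i)) ^ (1 / (1 + t)) := by
  have hr : 0 < 1 + t := by linarith
  have holder := inner_le_weight_mul_Lp_of_nonneg s (p := 1 + t) (by linarith)
    (fun i ↦ b ^ (-x i)) (fun i ↦ p i ^ (1 / (1 + t)) * b ^ x i)
    (fun i ↦ (rpow_pos_of_pos hb _).le) (fun i ↦ by have := hp i; positivity)
  have hweight (i : ι) : b ^ (-x i) * (p i ^ (1 / (1 + t)) * b ^ x i) = p i ^ (1 / (1 + t)) := by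
    rw [mul_left_comm, ← rpow_add hb, neg_add_cancel, rpow_zero, mul_one]
  have hmoment (i : ι) :
      b ^ (-x i) * (p i ^ (1 / (1 + t)) * b ^ x i) ^ (1 + t) = p i * b ^ (t * x i) := by
    rw [mul_rpow (rpow_nonneg (hp i) _) (rpow_nonneg hb.le _), ← rpow_mul (hp i),
      ← rpow_mul hb.le, one_div_mul_cancel hr.ne', rpow_one, mul_left_comm, ← rpow_add hb]
    ring_nf
  have hexp : 1 - 1 / (1 + t) = t / (1 + t) := by field_simp; ring
  simpa only [hweight, hmoment, hexp, ← one_div] using holder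

theorem cgf_ge_renyi_sub_log_kraft_general {α : Type*} [Fintype α]
    (p : α → ℝ) (hp : ∀ y, 0 < p y)
    (ℓ : α → ℕ) (t : ℝ) (ht : 0 < t) :
    (1 / t) * Real.logb 2 (∑ y, p y * (2 : ℝ) ^ (t * (ℓ y : ℝ)))
      ≥ ((1 + t) / t) * Real.logb 2 (∑ y, p y ^ (1 / (1 + t)))
        - Real.logb 2 (∑ y, (2 : ℝ) ^ (-(ℓ y : ℝ))) := by
  rcases isEmpty_or_nonempty α with _ | _
  · simp
  set M := ∑ y, p y * (2 : ℝ) ^ (t * (ℓ y : ℝ))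
  set R := ∑ y, p y ^ (1 / (1 + t))
  set K := ∑ y, (2 : ℝ) ^ (-(ℓ y : ℝ))
  have hM : 0 < M := sum_pos (fun y _ ↦ mul_pos (hp y) (by positivity)) univ_nonempty
  have hR : 0 < R := sum_pos (fun y _ ↦ rpow_pos_of_pos (hp y) _) univ_nonempty
  have hK : 0 < K := sum_pos (fun y _ ↦ by positivity) univ_nonempty
  have hbound : logb 2 R ≤ t / (1 + t) * logb 2 K + 1 / (1 + t) * logb 2 M := by
    have := logb_le_logb_of_le one_lt_two hR <|
      sum_rpow_one_div_one_add_le_kraft_mul_moment univ (x := fun y ↦ ℓ y) (fun y ↦ (hp y).le)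
        two_pos ht.le
    rwa [logb_mul (by positivity) (by positivity), logb_rpow_eq_mul_logb_of_pos hK,
      logb_rpow_eq_mul_logb_of_pos hM] at this
  calc (1 + t) / t * logb 2 R - logb 2 K
      ≤ (1 + t) / t * (t / (1 + t) * logb 2 K + 1 / (1 + t) * logb 2 M) - logb 2 K := by
        gcongr
    _ = 1 / t * logb 2 M := by field_simp; ring

/-- Let `Y` be a random variable on a finite support `α` with
`P_Y(y) > 0` summing to 1, and `ℓ : α → ℕ` arbitrary lengths. Then for every `t > 0`,
`(1/t)·log₂ E[2^{t·ℓ(Y)}] ≥ H_{1/(1+t)}(Y) − log₂ ∑_y 2^{−ℓ(y)}`, where the Rényi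
entropy of order `α = 1/(1+t)` is `(1/(1−α))·log₂ ∑_y P_Y(y)^α = ((1+t)/t)·log₂ ∑_y P_Y(y)^{1/(1+t)}`. -/
theorem cgf_ge_renyi_sub_log_kraft {α : Type*} [Fintype α]
    (p : α → ℝ) (hp : ∀ y, 0 < p y) (hsum : ∑ y, p y = 1)
    (ℓ : α → ℕ) (t : ℝ) (ht : 0 < t) :
    (1 / t) * Real.logb 2 (∑ y, p y * (2 : ℝ) ^ (t * (ℓ y : ℝ)))
      ≥ ((1 + t) / t) * Real.logb 2 (∑ y, p y ^ (1 / (1 + t)))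
        - Real.logb 2 (∑ y, (2 : ℝ) ^ (-(ℓ y : ℝ))) :=
  cgf_ge_renyi_sub_log_kraft_general p hp ℓ t ht
end

section
/- Let g be an injective map from a finite set of binary strings C ⊆ {0,1}* into a finite set Y with |C| ≤ min(|X|,|Y|) for finite sets X, Y, where each string is assigned its length ℓ. Then ∑_{w∈C} 2^{−ℓ(w)} ≤ log₂(1 + min(|X|,|Y|)). -/
/-!
Split `C` by the first letter into `C ∩ {ε}`, `0·A` and `1·B`, so that the sum `S(C)` equals
`[ε ∈ C] + (S(A) + S(B)) / 2`. By induction on the maximal length and midpoint concavity of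
`x ↦ log₂ (1 + x)`, `(S(A) + S(B)) / 2 ≤ log₂ (1 + (|A| + |B|) / 2) = log₂ (2 + |A| + |B|) - 1`.
If `ε ∈ C` this is `log₂ (1 + |C|) - 1`; otherwise it is at most `log₂ (1 + |C|)`.
-/

open Real Finset

theorem logb_two_one_add_add_logb_two_one_add_le {a b : ℝ} (ha : 0 ≤ a) (hb : 0 ≤ b) :
    logb 2 (1 + a) + logb 2 (1 + b) ≤ 2 * (logb 2 (2 + a + b) - 1) := by
  have hamgm : (1 + a) * (1 + b) ≤ ((2 + a + b) / 2) ^ 2 := by nlinarith [sq_nonneg (a - b)]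
  calc logb 2 (1 + a) + logb 2 (1 + b) = logb 2 ((1 + a) * (1 + b)) :=
        (logb_mul (by positivity) (by positivity)).symm
    _ ≤ logb 2 (((2 + a + b) / 2) ^ 2) := logb_le_logb_of_le one_lt_two (by positivity) hamgm
    _ = 2 * (logb 2 (2 + a + b) - 1) := by
        rw [logb_pow, logb_div (by positivity) two_ne_zero, logb_self_eq_one one_lt_two]
        norm_num

namespace List

variable {α : Type*}

noncomputable def leftQuotient (C : Finset (List α)) (a : α) : Finset (List α) :=
  C.preimage (a :: ·) List.cons_injective.injOn

theorem length_lt_of_mem_leftQuotient {C : Finset (List α)} {a : α} {n : ℕ}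
    (hC : ∀ w ∈ C, w.length < n + 1) : ∀ t ∈ leftQuotient C a, t.length < n := fun _ ht =>
  Nat.lt_of_succ_lt_succ (hC _ (mem_preimage.mp ht))

theorem sum_eq_ite_nil_add_sum_leftQuotient [Fintype α] [DecidableEq α] {M : Type*}
    [AddCommMonoid M] (C : Finset (List α)) (f : List α → M) :
    ∑ w ∈ C, f w =
      (if [] ∈ C then f [] else 0) + ∑ a : α, ∑ t ∈ leftQuotient C a, f (a :: t) := by
  classical
  rw [← sum_fiberwise C List.head? f, Fintype.sum_option]
  congr 1
  · simp only [head?_eq_none_iff, sum_filter, sum_ite_eq']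
  · refine Fintype.sum_congr _ _ fun a => ?_
    rw [leftQuotient, sum_preimage']
    congr 1
    ext w
    simp [head?_eq_some_iff, eq_comm]

theorem two_rpow_neg_length_cons (b : Bool) (t : List Bool) :
    (2 : ℝ) ^ (-((b :: t).length : ℝ)) = 2⁻¹ * 2 ^ (-(t.length : ℝ)) := by
  rw [length_cons, Nat.cast_succ, neg_add, rpow_add two_pos, rpow_neg_one, mul_comm]

theorem sum_two_rpow_neg_length_le_logb (C : Finset (List Bool)) :
    ∑ w ∈ C, (2 : ℝ) ^ (-(w.length : ℝ)) ≤ logb 2 (1 + #C) := by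
  suffices ∀ n, ∀ C : Finset (List Bool), (∀ w ∈ C, w.length < n) →
      ∑ w ∈ C, (2 : ℝ) ^ (-(w.length : ℝ)) ≤ logb 2 (1 + #C) from
    this _ C fun w hw => Nat.lt_succ_of_le (le_sup (f := length) hw)
  intro n
  induction n with
  | zero => intro C hC; simp [eq_empty_of_forall_notMem fun w hw => Nat.not_lt_zero _ (hC w hw)]
  | succ n ih =>
    intro C hC
    set A := leftQuotient C false
    set B := leftQuotient C true
    have hA := ih A (length_lt_of_mem_leftQuotient hC)
    have hB := ih B (length_lt_of_mem_leftQuotient hC)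
    have hsum := sum_eq_ite_nil_add_sum_leftQuotient C fun w => (2 : ℝ) ^ (-(w.length : ℝ))
    have hcard := sum_eq_ite_nil_add_sum_leftQuotient C fun _ => (1 : ℝ)
    simp only [Fintype.sum_bool, two_rpow_neg_length_cons, ← mul_sum, length_nil,
      Nat.cast_zero, neg_zero, rpow_zero] at hsum
    simp only [Fintype.sum_bool, sum_const, nsmul_one] at hcard
    have hconc := logb_two_one_add_add_logb_two_one_add_le (#A).cast_nonneg (#B).cast_nonneg
    rw [hsum, hcard]
    split_ifs with hnil
    · rw [show 1 + (1 + (#B + #A : ℝ)) = 2 + #A + #B by ring]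
      linarith
    · have hmono : logb 2 ((2 + #A + #B) / 2) ≤ logb 2 (1 + (0 + (#B + #A))) :=
        logb_le_logb_of_le one_lt_two (by positivity) (by linarith)
      rw [logb_div (by positivity) two_ne_zero, logb_self_eq_one one_lt_two] at hmono
      linarith

end List

theorem kraft_like_nonprefix_general {X Y : Type*} [Fintype X] [Fintype Y]
    (C : Finset (List Bool))
    (hcard : C.card ≤ min (Fintype.card X) (Fintype.card Y)) :
    ∑ w ∈ C, (2 : ℝ) ^ (-(w.length : ℝ))
      ≤ Real.logb 2 (1 + (min (Fintype.card X) (Fintype.card Y) : ℝ)) :=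
  (List.sum_two_rpow_neg_length_le_logb C).trans <|
    logb_le_logb_of_le one_lt_two (by positivity) (by gcongr; exact_mod_cast hcard)

/-- Let `g` be a map from a finite set `C` of binary strings into a
finite set `Y`, injective on `C`, with `|C| ≤ min(|X|,|Y|)` for finite sets `X, Y`.
Then `∑_{w ∈ C} 2^{−ℓ(w)} ≤ log₂(1 + min(|X|,|Y|))`, where `ℓ(w)` is the length
of the string `w`. -/
theorem kraft_like_nonprefix {X Y : Type*} [Fintype X] [Fintype Y]
    (C : Finset (List Bool)) (g : List Bool → Y)
    (hg : Set.InjOn g (C : Set (List Bool)))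
    (hcard : C.card ≤ min (Fintype.card X) (Fintype.card Y)) :
    ∑ w ∈ C, (2 : ℝ) ^ (-(w.length : ℝ))
      ≤ Real.logb 2 (1 + (min (Fintype.card X) (Fintype.card Y) : ℝ)) :=
  kraft_like_nonprefix_general C hcard
end

section
/- For any M distinct binary strings w₁,...,w_M ∈ {0,1}* (including possibly the empty string), ∑_{i=1}^M 2^{−ℓ(w_i)} ≤ log₂(1+M), where ℓ(w) denotes the length of w; moreover the sum is maximized by choosing the M shortest strings. -/
open Real Finset

/-!
Read each string `w` as the number `binaryIndex w ≥ 1` whose binary digits, from the least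
significant one, are those of `w` followed by a final `1`. This is injective and
`⌊log₂ (binaryIndex w)⌋` is the length of `w`, so the sum becomes `∑ g(n)` over `M` distinct
naturals `n = binaryIndex w - 1`, with `g(n) = 2^{-⌊log₂ (n+1)⌋}` antitone; hence it is largest
on `{0, …, M-1}`, i.e. for the `M` shortest strings. There `∑_{n<M} g(n) = t + x` where
`M + 1 = 2^t (1 + x)`, `0 ≤ x < 1`, and `x ≤ log₂ (1 + x)` by Bernoulli's inequality
`2^x ≤ 1 + x`.
-/

theorem Antitone.sum_le_sum_range_card {β : Type*} [AddCommMonoid β] [PartialOrder β]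
    [IsOrderedCancelAddMonoid β] {f : ℕ → β} (hf : Antitone f) (s : Finset ℕ) :
    ∑ n ∈ s, f n ≤ ∑ n ∈ range #s, f n := by
  rw [← sum_sdiff_le_sum_sdiff]
  have hcard : #(s \ range #s) = #(range #s \ s) := card_sdiff_comm (card_range _).symm
  calc ∑ n ∈ s \ range #s, f n
      ≤ #(s \ range #s) • f #s :=
        sum_le_card_nsmul _ _ _ fun n hn => hf (by simp only [mem_sdiff, mem_range] at hn; omega)
    _ = #(range #s \ s) • f #s := by rw [hcard]
    _ ≤ ∑ n ∈ range #s \ s, f n :=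
        card_nsmul_le_sum _ _ _ fun n hn => hf (by simp only [mem_sdiff, mem_range] at hn; omega)

theorem Antitone.sum_comp_le_sum_range {β ι : Type*} [AddCommMonoid β] [PartialOrder β]
    [IsOrderedCancelAddMonoid β] [Fintype ι] {f : ℕ → β} (hf : Antitone f) {e : ι → ℕ}
    (he : Function.Injective e) :
    ∑ i, f (e i) ≤ ∑ n ∈ range (Fintype.card ι), f n := by
  classical
  simpa [sum_image he.injOn, card_image_of_injective _ he] using
    hf.sum_le_sum_range_card (univ.image e)

def binaryIndex (l : List Bool) : ℕ := l.foldr Nat.bit 1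

@[simp] theorem binaryIndex_nil : binaryIndex [] = 1 := rfl

@[simp] theorem binaryIndex_cons (b : Bool) (l : List Bool) :
    binaryIndex (b :: l) = Nat.bit b (binaryIndex l) := rfl

theorem two_pow_length_le_binaryIndex (l : List Bool) : 2 ^ l.length ≤ binaryIndex l := by
  induction l with
  | nil => simp
  | cons b l ih => rw [binaryIndex_cons, Nat.bit_val, List.length_cons, pow_succ]; omega

theorem binaryIndex_lt_two_pow_length_succ (l : List Bool) :
    binaryIndex l < 2 ^ (l.length + 1) := by
  induction l with
  | nil => simp
  | cons b l ih => rwa [binaryIndex_cons, Nat.bit_lt_two_pow_succ_iff]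

theorem one_le_binaryIndex (l : List Bool) : 1 ≤ binaryIndex l :=
  Nat.one_le_two_pow.trans (two_pow_length_le_binaryIndex l)

theorem log_binaryIndex (l : List Bool) : Nat.log 2 (binaryIndex l) = l.length :=
  Nat.log_eq_of_pow_le_of_lt_pow (two_pow_length_le_binaryIndex l)
    (binaryIndex_lt_two_pow_length_succ l)

theorem binaryIndex_injective : Function.Injective binaryIndex := by
  intro l₁ l₂ h
  have hlen : l₁.length = l₂.length := by rw [← log_binaryIndex, h, log_binaryIndex]
  induction l₁ generalizing l₂ with
  | nil => exact (List.length_eq_zero_iff.mp hlen.symm).symm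
  | cons b l ih =>
    obtain ⟨b', l', rfl⟩ := List.exists_cons_of_length_eq_add_one hlen.symm
    rw [binaryIndex_cons, binaryIndex_cons] at h
    have hb : b = b' := by simpa only [Nat.testBit_bit_zero] using congrArg (Nat.testBit · 0) h
    have hl : binaryIndex l = binaryIndex l' := by
      have := congrArg (· / 2) h
      rwa [Nat.bit_div_two, Nat.bit_div_two] at this
    rw [hb, ih hl (by simpa using hlen)]

theorem antitone_inv_two_pow_log : Antitone fun n : ℕ => ((2 : ℝ) ^ Nat.log 2 (n + 1))⁻¹ :=
  fun _ _ h => inv_anti₀ (by positivity)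
    (pow_le_pow_right₀ one_le_two (Nat.log_mono_right (by omega)))

theorem sum_range_inv_two_pow_log (M : ℕ) :
    ∑ n ∈ range M, ((2 : ℝ) ^ Nat.log 2 (n + 1))⁻¹
      = Nat.log 2 (M + 1) + (M + 1) / 2 ^ Nat.log 2 (M + 1) - 1 := by
  induction M with
  | zero => simp
  | succ M ih =>
    rw [sum_range_succ, ih]
    set t := Nat.log 2 (M + 1)
    have hlow : 2 ^ t ≤ M + 1 := Nat.pow_log_le_self 2 (by omega)
    have hup : M + 1 < 2 ^ (t + 1) := Nat.lt_pow_succ_log_self one_lt_two _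
    push_cast
    rcases (show M + 2 < 2 ^ (t + 1) ∨ M + 2 = 2 ^ (t + 1) by omega) with hlt | heq
    · rw [show Nat.log 2 (M + 1 + 1) = t from
        Nat.log_eq_of_pow_le_of_lt_pow (by omega) (by omega)]
      field_simp
      ring
    · have hM : (M : ℝ) = 2 * 2 ^ t - 2 := by
        have : ((M + 2 : ℕ) : ℝ) = 2 ^ (t + 1) := by exact_mod_cast heq
        push_cast at this
        linarith [pow_succ' (2 : ℝ) t]
      rw [show M + 1 + 1 = 2 ^ (t + 1) by omega, Nat.log_pow one_lt_two, hM]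
      field_simp
      push_cast
      ring

theorem sub_one_le_logb_two {y : ℝ} (h₁ : 1 ≤ y) (h₂ : y ≤ 2) : y - 1 ≤ logb 2 y := by
  rw [le_logb_iff_rpow_le one_lt_two (by linarith)]
  have := rpow_one_add_le_one_add_mul_self (s := 1) (by norm_num) (p := y - 1)
    (by linarith) (by linarith)
  norm_num at this
  linarith

theorem sum_range_inv_two_pow_log_le_logb (M : ℕ) :
    ∑ n ∈ range M, ((2 : ℝ) ^ Nat.log 2 (n + 1))⁻¹ ≤ logb 2 (1 + M) := by
  rw [sum_range_inv_two_pow_log]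
  set t := Nat.log 2 (M + 1)
  have hlow : (2 : ℝ) ^ t ≤ M + 1 := by exact_mod_cast Nat.pow_log_le_self 2 (by omega)
  have hup : (M : ℝ) + 1 < 2 * 2 ^ t := by
    rw [← pow_succ']; exact_mod_cast Nat.lt_pow_succ_log_self one_lt_two _
  have hpos : (0 : ℝ) < 2 ^ t := by positivity
  set y := ((M : ℝ) + 1) / 2 ^ t
  have hy₁ : 1 ≤ y := (one_le_div hpos).mpr hlow
  have hy₂ : y ≤ 2 := (div_le_iff₀ hpos).mpr hup.le
  have hlogb : logb 2 (1 + M) = t + logb 2 y := by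
    rw [show (1 : ℝ) + M = 2 ^ t * y by rw [mul_div_cancel₀ _ hpos.ne', add_comm],
      logb_mul hpos.ne' (by positivity), logb_pow, logb_self_eq_one one_lt_two, mul_one]
  linarith [sub_one_le_logb_two hy₁ hy₂]

/-- For any `M` distinct binary strings `w 0, ..., w (M-1)` (possibly
including the empty string), `∑ i, 2^{−ℓ(w i)} ≤ log₂(1+M)`; moreover the sum is
maximized by choosing the `M` shortest strings, i.e. it is at most
`∑ i, 2^{−⌊log₂ (i+1)⌋}` (the `i`-th shortest binary string has length
`⌊log₂ (i+1)⌋ = Nat.log 2 (i+1)` for the 0-based index `i`). -/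
theorem sum_two_pow_neg_length_le {M : ℕ} (w : Fin M → List Bool)
    (hw : Function.Injective w) :
    (∑ i, (2 : ℝ) ^ (-((w i).length : ℝ)) ≤ Real.logb 2 (1 + (M : ℝ))) ∧
    (∑ i, (2 : ℝ) ^ (-((w i).length : ℝ))
      ≤ ∑ i : Fin M, (2 : ℝ) ^ (-(Nat.log 2 ((i : ℕ) + 1) : ℝ))) := by
  simp only [rpow_neg zero_le_two, rpow_natCast]
  set e : Fin M → ℕ := fun i => binaryIndex (w i) - 1
  have hlen : ∀ i, (w i).length = Nat.log 2 (e i + 1) := fun i => by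
    rw [Nat.sub_add_cancel (one_le_binaryIndex _), log_binaryIndex]
  have he : Function.Injective e := fun i j h => hw <| binaryIndex_injective <| by
    have := one_le_binaryIndex (w i)
    have := one_le_binaryIndex (w j)
    simp only [e] at h
    omega
  have hsorted : ∑ i, ((2 : ℝ) ^ (w i).length)⁻¹
      ≤ ∑ n ∈ range M, ((2 : ℝ) ^ Nat.log 2 (n + 1))⁻¹ := by
    simpa only [hlen, Fintype.card_fin] using antitone_inv_two_pow_log.sum_comp_le_sum_range he
  rw [Fin.sum_univ_eq_sum_range (fun n => ((2 : ℝ) ^ Nat.log 2 (n + 1))⁻¹)]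
  exact ⟨hsorted.trans (sum_range_inv_two_pow_log_le_logb M), hsorted⟩
end

section
/- Converse: For any finite source X on 𝒳, finite 𝒴, D ≥ 0, ε ∈ [0,1), t > 0, any code (f,g) with injective decoder g satisfying P[d(X, g(f(X))) > D] ≤ ε must satisfy (1/t)·log₂ E[2^{t·ℓ(f(X))}] ≥ G^{D,ε}_{1/(1+t)}(X) − log₂ log₂(1 + min(|𝒳|,|𝒴|)), where G^{D,ε}_α(X) is the minimum Rényi entropy H_α(Y) over all conditional distributions P_{Y|X} with P[d(X,Y) > D] ≤ ε. -/
/-!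
Collapse the code to a channel with at most `min |𝒳| |𝒴|` outputs: each `x` sends its
non-excess mass to `g` of its shortest good codeword, and its excess mass to `g` of the shortest
of these codewords, which is then swapped with the empty string. The swap keeps the labelling
one-to-one and only shortens labels, so neither the cost `E[2^{tℓ}]` nor the excess probability
grows. For the output law `P` with one-to-one labels `ℓ`, Hölder's inequality gives
`∑ P^α ≤ (∑ 2^{-ℓ})^{1-α} (∑ P 2^{tℓ})^α` with `α = 1/(1+t)`, and `n` distinct binary strings
satisfy `∑ 2^{-ℓ} ≤ log₂ (1 + n)`: split them by their first bit and use concavity of `log₂`.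
-/

open Real Finset

lemma sum_eq_ite_nil_add_sum_preimage_cons {M : Type*} [AddCommMonoid M]
    (F : Finset (List Bool)) (φ : List Bool → M) :
    ∑ w ∈ F, φ w = (if [] ∈ F then φ [] else 0) +
      ∑ b : Bool, ∑ v ∈ F.preimage (List.cons b) List.cons_injective.injOn, φ (b :: v) := by
  classical
  rw [← Finset.sum_fiberwise F List.head? φ, Fintype.sum_option]
  congr 1
  · rw [Finset.sum_filter]
    simp [List.head?_eq_none_iff]
  · refine Fintype.sum_congr _ _ fun b => ?_
    rw [Finset.sum_preimage']
    refine Finset.sum_congr (Finset.filter_congr fun w _ => ?_) fun _ _ => rfl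
    cases w <;> simp [eq_comm]

lemma add_half_logb_one_add_le {a b e : ℝ} (ha : 0 ≤ a) (hb : 0 ≤ b) (he : e = 0 ∨ e = 1) :
    e + (logb 2 (1 + a) + logb 2 (1 + b)) / 2 ≤ logb 2 (1 + (e + (a + b))) := by
  have hmid : (logb 2 (1 + a) + logb 2 (1 + b)) / 2 ≤ logb 2 (1 + (a + b) / 2) := by
    have h : (1 + a) * (1 + b) ≤ (1 + (a + b) / 2) ^ 2 := by nlinarith [sq_nonneg (a - b)]
    have := logb_le_logb_of_le one_lt_two (by positivity) h
    rw [logb_mul (by positivity) (by positivity), logb_pow] at this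
    push_cast at this
    linarith
  rcases he with rfl | rfl
  · linarith [logb_le_logb_of_le one_lt_two (by positivity : 0 < 1 + (a + b) / 2)
      (by linarith : 1 + (a + b) / 2 ≤ 1 + (0 + (a + b)))]
  · have : 1 + (1 + (a + b)) = 2 * (1 + (a + b) / 2) := by ring
    rw [this, logb_mul two_ne_zero (by positivity), logb_self_eq_one one_lt_two]
    linarith

theorem sum_inv_two_pow_length_le_logb (F : Finset (List Bool)) :
    ∑ w ∈ F, (2:ℝ)⁻¹ ^ w.length ≤ logb 2 (1 + #F) := by
  obtain ⟨n, hn⟩ : ∃ n, ∀ w ∈ F, w.length < n :=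
    ⟨F.sup List.length + 1, fun w hw => Nat.lt_succ_of_le (le_sup hw)⟩
  induction n generalizing F with
  | zero => simp [eq_empty_of_forall_notMem (by simpa using hn)]
  | succ n ih =>
    set F₀ := F.preimage (List.cons false) List.cons_injective.injOn
    set F₁ := F.preimage (List.cons true) List.cons_injective.injOn
    set e : ℝ := if [] ∈ F then 1 else 0
    have hsum : ∑ w ∈ F, (2:ℝ)⁻¹ ^ w.length =
        e + (∑ w ∈ F₁, (2:ℝ)⁻¹ ^ w.length + ∑ w ∈ F₀, (2:ℝ)⁻¹ ^ w.length) / 2 := by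
      rw [sum_eq_ite_nil_add_sum_preimage_cons F]
      simp [e, F₀, F₁, pow_succ, ← sum_mul, div_eq_mul_inv]
    have hcard : (#F : ℝ) = e + (#F₁ + #F₀) := by
      simp only [cast_card, sum_eq_ite_nil_add_sum_preimage_cons F (fun _ => (1:ℝ)),
        Fintype.sum_bool, e, F₀, F₁]
    have htail : ∀ b, ∀ v ∈ F.preimage (List.cons b) List.cons_injective.injOn, v.length < n :=
      fun b v hv => by simpa using hn _ (mem_preimage.1 hv)
    rw [hsum, hcard]
    calc _ ≤ e + (logb 2 (1 + #F₁) + logb 2 (1 + #F₀)) / 2 := by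
          gcongr
          exacts [ih _ (htail true), ih _ (htail false)]
      _ ≤ _ := add_half_logb_one_add_le (by positivity) (by positivity)
          (by unfold e; split_ifs <;> simp)

lemma sum_rpow_le_kraft_mul_cgf {ι : Type*} (S : Finset ι) (P : ι → ℝ) (hP : ∀ i, 0 ≤ P i)
    (ℓ : ι → ℕ) {t : ℝ} (ht : 0 ≤ t) :
    ∑ i ∈ S, P i ^ (1 + t)⁻¹ ≤
      (∑ i ∈ S, (2:ℝ)⁻¹ ^ ℓ i) ^ (1 - (1 + t)⁻¹) *
        (∑ i ∈ S, P i * 2 ^ (t * ℓ i)) ^ (1 + t)⁻¹ := by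
  have h2 : ∀ i, (2:ℝ)⁻¹ ^ ℓ i = 2 ^ (-(ℓ i : ℝ)) := fun i => by
    rw [rpow_neg two_pos.le, rpow_natCast, inv_pow]
  have key := inner_le_weight_mul_Lp_of_nonneg S (p := 1 + t) (by linarith)
    (fun i => (2:ℝ) ^ (-(ℓ i : ℝ))) (fun i => P i ^ (1 + t)⁻¹ * 2 ^ (ℓ i : ℝ))
    (fun i => by positivity) (fun i => by have := hP i; positivity)
  simp only [h2]
  convert key using 3 with i
  · rw [mul_left_comm, ← rpow_add two_pos, neg_add_cancel, rpow_zero, mul_one]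
  · refine sum_congr rfl fun i _ => ?_
    rw [mul_rpow (rpow_nonneg (hP i) _) (by positivity), rpow_inv_rpow (hP i) (by linarith),
      ← rpow_mul two_pos.le, mul_left_comm, ← rpow_add two_pos]
    ring_nf

theorem renyi_le_cgf_add_logb_logb {ι : Type*} (S : Finset ι) (P : ι → ℝ)
    (hP : ∀ i, 0 ≤ P i) (hPpos : 0 < ∑ i ∈ S, P i) (c : ι → List Bool) (hc : Set.InjOn c S)
    {t : ℝ} (ht : 0 < t) {E N : ℝ} (hE : ∑ i ∈ S, P i * 2 ^ (t * (c i).length) ≤ E)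
    (hN : #S ≤ N) :
    ((1 + t) / t) * logb 2 (∑ i ∈ S, P i ^ (1 / (1 + t))) ≤
      (1 / t) * logb 2 E + logb 2 (logb 2 (1 + N)) := by
  set K := ∑ i ∈ S, (2:ℝ)⁻¹ ^ (c i).length
  set C := ∑ i ∈ S, P i * 2 ^ (t * (c i).length)
  obtain ⟨i₀, hi₀, hPi₀⟩ := exists_lt_of_sum_lt (s := S) (f := 0) (g := P) (by simpa using hPpos)
  have hR : 0 < ∑ i ∈ S, P i ^ (1 + t)⁻¹ :=
    (rpow_pos_of_pos hPi₀ _).trans_le (single_le_sum (fun i _ => rpow_nonneg (hP i) _) hi₀)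
  have hK : 0 < K := sum_pos (fun _ _ => by positivity) ⟨i₀, hi₀⟩
  have hC : 0 < C := hPpos.trans_le <| sum_le_sum fun i _ =>
    le_mul_of_one_le_right (hP i) (one_le_rpow one_le_two (by positivity))
  have hKraft : K ≤ logb 2 (1 + N) := by
    have := sum_inv_two_pow_length_le_logb (S.image c)
    rw [sum_image hc, card_image_of_injOn hc] at this
    exact this.trans (by gcongr; exact one_lt_two)
  have hHolder := logb_le_logb_of_le one_lt_two hR
    (sum_rpow_le_kraft_mul_cgf S P hP (fun i => (c i).length) ht.le)
  rw [logb_mul (by positivity) (by positivity), logb_rpow_eq_mul_logb_of_pos hK,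
    logb_rpow_eq_mul_logb_of_pos hC] at hHolder
  have hlogK : logb 2 K ≤ logb 2 (logb 2 (1 + N)) := logb_le_logb_of_le one_lt_two hK hKraft
  have hlogC : logb 2 C ≤ logb 2 E := logb_le_logb_of_le one_lt_two hC hE
  calc (1 + t) / t * logb 2 (∑ i ∈ S, P i ^ (1 / (1 + t)))
      ≤ (1 + t) / t * ((1 - (1 + t)⁻¹) * logb 2 K + (1 + t)⁻¹ * logb 2 C) := by
        rw [one_div]; gcongr
    _ = logb 2 K + 1 / t * logb 2 C := by field_simp; ring
    _ ≤ _ := by linarith [mul_le_mul_of_nonneg_left hlogC (one_div_nonneg.2 ht.le)]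

lemma Finset.exists_min_image_filter_of_nonempty {α β : Type*} [LinearOrder β] {s : Finset α}
    (hs : s.Nonempty) (q : α → Prop) [DecidablePred q] (ℓ : α → β) :
    ∃ a ∈ s, (∀ b ∈ s, q b → ℓ a ≤ ℓ b) ∧ ((∃ b ∈ s, q b) → q a) := by
  by_cases h : ∃ b ∈ s, q b
  · obtain ⟨a, ha, hmin⟩ := (s.filter q).exists_min_image ℓ (by simpa [Finset.Nonempty] using h)
    rw [mem_filter] at ha
    exact ⟨a, ha.1, fun b hb hqb => hmin b (mem_filter.2 ⟨hb, hqb⟩), fun _ => ha.2⟩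
  · obtain ⟨a, ha⟩ := hs
    exact ⟨a, ha, fun b hb hqb => absurd ⟨b, hb, hqb⟩ h, fun h' => absurd h' h⟩

lemma length_swap_nil_le {α : Type*} [DecidableEq α] {w₀ w : List α}
    (h : w₀.length ≤ w.length) : (Equiv.swap w₀ [] w).length ≤ w.length := by
  rw [Equiv.swap_apply_def]
  split_ifs with h₁ h₂
  · simp
  · simpa [h₂] using h
  · rfl

lemma add_le_sum_mul_two_rpow_length (W : Finset (List Bool)) (φ : List Bool → ℝ)
    (hφ : ∀ w, 0 ≤ φ w) (hφ1 : ∑ w ∈ W, φ w = 1) (q : List Bool → Prop) [DecidablePred q]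
    {ℓ : ℕ} (hℓ : ∀ w ∈ W, ¬ q w → ℓ ≤ w.length) {t : ℝ} (ht : 0 ≤ t) :
    (1 - ∑ w ∈ W with q w, φ w) * 2 ^ (t * ℓ) + ∑ w ∈ W with q w, φ w ≤
      ∑ w ∈ W, φ w * 2 ^ (t * w.length) := by
  rw [← hφ1, ← sum_filter_add_sum_filter_not W q, ← sum_filter_add_sum_filter_not W q,
    add_sub_cancel_left, sum_mul, add_comm]
  refine add_le_add (sum_le_sum fun w _ => ?_) (sum_le_sum fun w hw => ?_)
  · exact le_mul_of_one_le_right (hφ w) (one_le_rpow one_le_two (by positivity))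
  · rw [mem_filter] at hw
    exact mul_le_mul_of_nonneg_left (rpow_le_rpow_of_exponent_le one_le_two
      (by gcongr; exact hℓ w hw.1 hw.2)) (hφ w)

section TwoPoint

variable {𝒴 : Type*} [DecidableEq 𝒴]

def twoPoint (a : ℝ) (y₁ y₀ y : 𝒴) : ℝ :=
  (1 - a) * (if y = y₁ then 1 else 0) + a * (if y = y₀ then 1 else 0)

lemma twoPoint_nonneg {a : ℝ} (h0 : 0 ≤ a) (h1 : a ≤ 1) (y₁ y₀ y : 𝒴) :
    0 ≤ twoPoint a y₁ y₀ y := by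
  unfold twoPoint
  split_ifs <;> linarith

lemma twoPoint_eq_zero (a : ℝ) {y₁ y₀ y : 𝒴} (h₁ : y ≠ y₁) (h₀ : y ≠ y₀) :
    twoPoint a y₁ y₀ y = 0 := by
  simp [twoPoint, h₁, h₀]

lemma sum_twoPoint_mul (a : ℝ) {y₁ y₀ : 𝒴} {S : Finset 𝒴} (h₁ : y₁ ∈ S) (h₀ : y₀ ∈ S)
    (h : 𝒴 → ℝ) : ∑ y ∈ S, twoPoint a y₁ y₀ y * h y = (1 - a) * h y₁ + a * h y₀ := by
  simp [twoPoint, add_mul, sum_add_distrib, h₁, h₀]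

lemma sum_filter_twoPoint_le [Fintype 𝒴] {a : ℝ} (h0 : 0 ≤ a) (q : 𝒴 → Prop)
    [DecidablePred q] {y₁ y₀ : 𝒴} (hy₁ : q y₁ → a = 1) :
    ∑ y with q y, twoPoint a y₁ y₀ y ≤ a := by
  have h := sum_twoPoint_mul a (mem_univ y₁) (mem_univ y₀) (fun y => if q y then 1 else 0)
  simp only [mul_boole] at h
  rw [sum_filter, h]
  by_cases hq : q y₁ <;> split_ifs <;> simp_all

end TwoPoint

theorem exists_reduced_channel {𝒳 𝒴 : Type*} [Fintype 𝒳] [Nonempty 𝒳] [Fintype 𝒴]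
    (p : 𝒳 → ℝ) (hp : ∀ x, 0 ≤ p x) (d : 𝒳 → 𝒴 → ℝ) (D : ℝ) {t : ℝ}
    (ht : 0 ≤ t) (W : Finset (List Bool)) (f : 𝒳 → List Bool → ℝ) (g : List Bool → 𝒴)
    (hf0 : ∀ x w, 0 ≤ f x w) (hf1 : ∀ x, ∑ w ∈ W, f x w = 1) (hginj : Set.InjOn g W) :
    ∃ (Q : 𝒳 → 𝒴 → ℝ) (S : Finset 𝒴) (c : 𝒴 → List Bool),
      (∀ x y, 0 ≤ Q x y) ∧ (∀ x, ∑ y, Q x y = 1) ∧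
      (∀ x, ∑ y with D < d x y, Q x y ≤ ∑ w ∈ W with D < d x (g w), f x w) ∧
      (∀ x, ∀ y ∉ S, Q x y = 0) ∧ #S ≤ Fintype.card 𝒳 ∧ Set.InjOn c S ∧
      ∑ y ∈ S, (∑ x, p x * Q x y) * 2 ^ (t * (c y).length) ≤
        ∑ x, p x * ∑ w ∈ W, f x w * 2 ^ (t * w.length) := by
  classical
  obtain ⟨x₁⟩ := ‹Nonempty 𝒳›
  have hW : W.Nonempty := nonempty_of_sum_ne_zero (by rw [hf1 x₁]; exact one_ne_zero)
  set bad : 𝒳 → ℝ := fun x => ∑ w ∈ W with D < d x (g w), f x w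
  have hbad0 : ∀ x, 0 ≤ bad x := fun x => sum_nonneg fun w _ => hf0 x w
  have hbad1 : ∀ x, bad x ≤ 1 := fun x => hf1 x ▸
    sum_le_sum_of_subset_of_nonneg (filter_subset _ _) fun w _ _ => hf0 x w
  choose wb hwbW hwb_min hwb_good using fun x =>
    exists_min_image_filter_of_nonempty hW (fun w => ¬ D < d x (g w)) List.length
  have hbad_eq_one : ∀ x, D < d x (g (wb x)) → bad x = 1 := fun x hx => by
    rw [← hf1 x]
    refine congrArg (∑ w ∈ ·, f x w) (filter_true_of_mem fun w hw => ?_)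
    by_contra hw'
    exact hwb_good x ⟨w, hw, hw'⟩ hx
  obtain ⟨x₀, -, hx₀⟩ := univ.exists_min_image (fun x => (wb x).length) univ_nonempty
  set S := univ.image (fun x => g (wb x))
  set c := Equiv.swap (wb x₀) [] ∘ Function.invFunOn g W
  have hc : ∀ x, c (g (wb x)) = Equiv.swap (wb x₀) [] (wb x) := fun x => by
    simp [c, hginj.leftInvOn_invFunOn (hwbW x)]
  have hS : ∀ x, g (wb x) ∈ S := fun x => mem_image_of_mem _ (mem_univ x)
  refine ⟨fun x => twoPoint (bad x) (g (wb x)) (g (wb x₀)), S, c,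
    fun x => twoPoint_nonneg (hbad0 x) (hbad1 x) _ _,
    fun x => by simpa using sum_twoPoint_mul (bad x) (mem_univ _) (mem_univ _) 1,
    fun x => sum_filter_twoPoint_le (hbad0 x) _ (hbad_eq_one x),
    fun x y hy => twoPoint_eq_zero _ (fun h => hy (h ▸ hS x)) (fun h => hy (h ▸ hS x₀)),
    card_image_le.trans card_univ.le, ?_, ?_⟩
  · refine (Equiv.injective _).comp_injOn ((Function.invFunOn_injOn_image g W).mono ?_)
    rw [coe_image]
    rintro _ ⟨x, -, rfl⟩
    exact ⟨wb x, hwbW x, rfl⟩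
  · simp only [sum_mul, mul_assoc]
    rw [sum_comm]
    simp only [← mul_sum]
    refine sum_le_sum fun x _ => mul_le_mul_of_nonneg_left ?_ (hp x)
    rw [sum_twoPoint_mul _ (hS x) (hS x₀), hc, hc, Equiv.swap_apply_left, List.length_nil,
      Nat.cast_zero, mul_zero, rpow_zero, mul_one]
    exact add_le_sum_mul_two_rpow_length W (f x) (hf0 x) (hf1 x) _ (fun w hw hq =>
      (length_swap_nil_le (hx₀ x (mem_univ x))).trans (hwb_min x w hw hq)) ht

theorem lossy_converse_general {𝒳 𝒴 : Type*} [Fintype 𝒳] [Fintype 𝒴]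
    (p : 𝒳 → ℝ) (hp : ∀ x, 0 ≤ p x) (hpsum : ∑ x, p x = 1)
    (d : 𝒳 → 𝒴 → ℝ)
    (D : ℝ) (ε : ℝ)
    (t : ℝ) (ht : 0 < t)
    (W : Finset (List Bool)) (f : 𝒳 → List Bool → ℝ) (g : List Bool → 𝒴)
    (hf0 : ∀ x w, 0 ≤ f x w)
    (hf1 : ∀ x, ∑ w ∈ W, f x w = 1)
    (hginj : Set.InjOn g (W : Set (List Bool)))
    (hexcess : (∑ x, p x * ∑ w ∈ W.filter (fun w => D < d x (g w)), f x w) ≤ ε) :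
    ∃ Q : 𝒳 → 𝒴 → ℝ,
      (∀ x y, 0 ≤ Q x y) ∧ (∀ x, ∑ y, Q x y = 1) ∧
      (∑ x, p x * ∑ y ∈ Finset.univ.filter (fun y => D < d x y), Q x y) ≤ ε ∧
      (1 / t) * Real.logb 2
          (∑ x, p x * ∑ w ∈ W, f x w * (2 : ℝ) ^ (t * (w.length : ℝ)))
        ≥ ((1 + t) / t) *
            Real.logb 2 (∑ y, (∑ x, p x * Q x y) ^ (1 / (1 + t)))
          - Real.logb 2
              (Real.logb 2 (1 + (min (Fintype.card 𝒳) (Fintype.card 𝒴) : ℝ))) := by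
  have : Nonempty 𝒳 := univ_nonempty_iff.1 (nonempty_of_sum_ne_zero (f := p) (by simp [hpsum]))
  obtain ⟨Q, S, c, hQ0, hQ1, hQexcess, hQS, hS, hc, hcost⟩ :=
    exists_reduced_channel p hp d D ht.le W f g hf0 hf1 hginj
  refine ⟨Q, hQ0, hQ1,
    (sum_le_sum fun x _ => mul_le_mul_of_nonneg_left (hQexcess x) (hp x)).trans hexcess, ?_⟩
  have hP : ∀ y, 0 ≤ ∑ x, p x * Q x y := fun y =>
    sum_nonneg fun x _ => mul_nonneg (hp x) (hQ0 x y)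
  have hPS : ∀ y ∉ S, ∑ x, p x * Q x y = 0 := fun y hy =>
    sum_eq_zero fun x _ => by simp [hQS x y hy]
  have hP1 : ∑ y ∈ S, ∑ x, p x * Q x y = 1 := by
    rw [sum_subset (subset_univ S) fun y _ hy => hPS y hy, sum_comm]
    simp [← mul_sum, hQ1, hpsum]
  rw [← sum_subset (subset_univ S) fun y _ hy => by rw [hPS y hy, zero_rpow (by positivity)]]
  have hcard : (#S : ℝ) ≤ min (Fintype.card 𝒳 : ℝ) (Fintype.card 𝒴) :=
    le_min (by exact_mod_cast hS) (by exact_mod_cast card_le_univ S)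
  have := renyi_le_cgf_add_logb_logb S _ hP (by rw [hP1]; exact one_pos) c hc ht hcost hcard
  linarith

/-- Converse. For a finite source `X` with pmf `p` on `𝒳`, finite `𝒴`,
`D ≥ 0`, `ε ∈ [0,1)`, `t > 0`, any variable-length code with a stochastic encoder
`f` (supported on a finite set `W` of binary codewords), a decoder `g` injective on
`W`, and excess distortion probability `P[d(X, g(f(X))) > D] ≤ ε`, must satisfy
`(1/t)·log₂ E[2^{t·ℓ(f(X))}] ≥ G^{D,ε}_{1/(1+t)}(X) − log₂ log₂(1 + min(|𝒳|,|𝒴|))`: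
namely there exists a feasible conditional distribution `Q` with
`P[d(X,Y) > D] ≤ ε` whose output Rényi entropy lower bounds the cumulant
generating function up to the `log log` term. -/
theorem lossy_converse {𝒳 𝒴 : Type*} [Fintype 𝒳] [Fintype 𝒴] [Nonempty 𝒴]
    (p : 𝒳 → ℝ) (hp : ∀ x, 0 ≤ p x) (hpsum : ∑ x, p x = 1)
    (d : 𝒳 → 𝒴 → ℝ) (hd : ∀ x y, 0 ≤ d x y)
    (D : ℝ) (hD : 0 ≤ D) (ε : ℝ) (hε0 : 0 ≤ ε) (hε1 : ε < 1)
    (t : ℝ) (ht : 0 < t)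
    (W : Finset (List Bool)) (f : 𝒳 → List Bool → ℝ) (g : List Bool → 𝒴)
    (hf0 : ∀ x w, 0 ≤ f x w)
    (hfW : ∀ x, ∀ w ∉ W, f x w = 0)
    (hf1 : ∀ x, ∑ w ∈ W, f x w = 1)
    (hginj : Set.InjOn g (W : Set (List Bool)))
    (hexcess : (∑ x, p x * ∑ w ∈ W.filter (fun w => D < d x (g w)), f x w) ≤ ε) :
    ∃ Q : 𝒳 → 𝒴 → ℝ,
      (∀ x y, 0 ≤ Q x y) ∧ (∀ x, ∑ y, Q x y = 1) ∧
      (∑ x, p x * ∑ y ∈ Finset.univ.filter (fun y => D < d x y), Q x y) ≤ ε ∧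
      (1 / t) * Real.logb 2
          (∑ x, p x * ∑ w ∈ W, f x w * (2 : ℝ) ^ (t * (w.length : ℝ)))
        ≥ ((1 + t) / t) *
            Real.logb 2 (∑ y, (∑ x, p x * Q x y) ^ (1 / (1 + t)))
          - Real.logb 2
              (Real.logb 2 (1 + (min (Fintype.card 𝒳) (Fintype.card 𝒴) : ℝ))) :=
  lossy_converse_general p hp hpsum d D ε t ht W f g hf0 hf1 hginj hexcess
end

section
/- Prefix-code converse: for any prefix-free code (f^p, g^p) with injective decoder satisfying P[d(X, g^p(f^p(X))) > D] ≤ ε, and any t > 0, (1/t)·log₂ E[2^{t·ℓ(f^p(X))}] ≥ G^{D,ε}_{1/(1+t)}(X). -/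
/-!
The deterministic decoder `g` turns the encoder `f` into the channel
`Q x y = ∑_{w ∈ W, g w = y} f x w`, which is feasible because its excess-distortion probability
is exactly that of the code. Since `g` is injective on the codebook, the output distribution of
`Q` is the codeword distribution `q` relabelled, so its Rényi entropy of order `1/(1+t)` is that
of `q`. Campbell's bound for `q` then follows from Hölder's inequality with exponents `1 + t` and
`(1 + t)/t`, together with Kraft's inequality `∑ 2^{-ℓ(w)} ≤ 1` for prefix-free codebooks.
-/

open Real Finset

theorem sum_rpow_le_rpow_sum_mul_rpow_of_kraft {ι : Type*} {s : Finset ι} {q ℓ : ι → ℝ}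
    {b t : ℝ} (hb : 0 < b) (ht : 0 < t) (hq : ∀ i ∈ s, 0 ≤ q i)
    (hkraft : ∑ i ∈ s, b ^ (-ℓ i) ≤ 1) :
    ∑ i ∈ s, q i ^ (1 / (1 + t)) ≤ (∑ i ∈ s, q i * b ^ (t * ℓ i)) ^ (1 / (1 + t)) := by
  have hconj : HolderConjugate (1 + t) ((1 + t) / t) :=
    holderConjugate_iff.2 ⟨by linarith, by field_simp⟩
  have hmoment : ∀ i ∈ s, 0 ≤ q i * b ^ (t * ℓ i) :=
    fun i hi => mul_nonneg (hq i hi) (rpow_nonneg hb.le _)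
  have holder := inner_le_Lp_mul_Lq_of_nonneg s hconj
    (f := fun i => (q i * b ^ (t * ℓ i)) ^ (1 / (1 + t)))
    (g := fun i => b ^ (-ℓ i * (t / (1 + t))))
    (fun i hi => rpow_nonneg (hmoment i hi) _) (fun i _ => rpow_nonneg hb.le _)
  have hsplit : ∀ i ∈ s, (q i * b ^ (t * ℓ i)) ^ (1 / (1 + t)) * b ^ (-ℓ i * (t / (1 + t)))
      = q i ^ (1 / (1 + t)) := fun i hi => by
    rw [mul_rpow (hq i hi) (rpow_nonneg hb.le _), ← rpow_mul hb.le, mul_assoc, ← rpow_add hb]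
    field_simp
    simp
  have hpow_moment : ∀ i ∈ s,
      ((q i * b ^ (t * ℓ i)) ^ (1 / (1 + t))) ^ (1 + t) = q i * b ^ (t * ℓ i) :=
    fun i hi => by rw [← rpow_mul (hmoment i hi), one_div_mul_cancel (by linarith), rpow_one]
  have hpow_kraft : ∀ i ∈ s, (b ^ (-ℓ i * (t / (1 + t)))) ^ ((1 + t) / t) = b ^ (-ℓ i) :=
    fun i _ => by rw [← rpow_mul hb.le]; field_simp
  rw [sum_congr rfl hsplit, sum_congr rfl hpow_moment, sum_congr rfl hpow_kraft,
    one_div_div] at holder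
  calc ∑ i ∈ s, q i ^ (1 / (1 + t))
      ≤ (∑ i ∈ s, q i * b ^ (t * ℓ i)) ^ (1 / (1 + t)) * (∑ i ∈ s, b ^ (-ℓ i)) ^ (t / (1 + t)) :=
        holder
    _ ≤ (∑ i ∈ s, q i * b ^ (t * ℓ i)) ^ (1 / (1 + t)) := by
        refine mul_le_of_le_one_right (rpow_nonneg (sum_nonneg hmoment) _) ?_
        exact rpow_le_one (sum_nonneg fun i _ => rpow_nonneg hb.le _) hkraft (by positivity)

theorem Finset.sum_comp_sum_fiberwise_of_injOn {ι κ M N : Type*} [Fintype κ] [DecidableEq κ]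
    [AddCommMonoid M] [AddCommMonoid N] {s : Finset ι} {g : ι → κ} (hg : Set.InjOn g s)
    (h : ι → M) {F : M → N} (hF : F 0 = 0) :
    ∑ y, F (∑ i ∈ s with g i = y, h i) = ∑ i ∈ s, F (h i) := by
  rw [← sum_fiberwise s g (fun i => F (h i))]
  refine sum_congr rfl fun y _ => ?_
  rcases (s.filter (g · = y)).eq_empty_or_nonempty with hy | ⟨i, hi⟩
  · simp [hy, hF]
  · rw [mem_filter] at hi
    have hfiber : s.filter (g · = y) = {i} := eq_singleton_iff_unique_mem.2 ⟨mem_filter.2 hi,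
      fun j hj => hg (mem_filter.1 hj).1 hi.1 ((mem_filter.1 hj).2.trans hi.2.symm)⟩
    simp [hfiber]

namespace InformationTheory

variable {α : Type*}

def PrefixFree (S : Set (List α)) : Prop :=
  ∀ w ∈ S, ∀ w' ∈ S, w ≠ w' → ¬ w <+: w'

theorem PrefixFree.uniquelyDecodable {S : Set (List α)} (hS : PrefixFree S) (hnil : [] ∉ S) :
    UniquelyDecodable S := by
  intro L₁
  induction L₁ with
  | nil =>
    rintro (_ | ⟨b, L₂⟩) - h₂ h
    · rfl
    · exact absurd (h₂ b (.head _)) (by simp_all)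
  | cons a L₁ ih =>
    rintro (_ | ⟨b, L₂⟩) h₁ h₂ h
    · exact absurd (h₁ a (.head _)) (by simp_all)
    · rw [List.flatten_cons, List.flatten_cons] at h
      have hab : a = b := by
        by_contra hne
        rcases List.prefix_or_prefix_of_prefix (List.prefix_append a _)
            (h ▸ List.prefix_append b _) with hpre | hpre
        exacts [hS a (h₁ a (.head _)) b (h₂ b (.head _)) hne hpre,
          hS b (h₂ b (.head _)) a (h₁ a (.head _)) (Ne.symm hne) hpre]
      subst hab
      rw [ih L₂ (fun w hw => h₁ w (.tail _ hw)) (fun w hw => h₂ w (.tail _ hw))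
        (List.append_cancel_left h)]

theorem PrefixFree.kraft_inequality [Fintype α] [Nonempty α] {W : Finset (List α)}
    (hW : PrefixFree (W : Set (List α))) :
    ∑ w ∈ W, (1 / Fintype.card α : ℝ) ^ w.length ≤ 1 := by
  by_cases hnil : [] ∈ W
  · have hW_eq : W = {[]} := eq_singleton_iff_unique_mem.2
      ⟨hnil, fun w hw => by_contra fun hne => hW [] hnil w hw (Ne.symm hne) List.nil_prefix⟩
    simp [hW_eq]
  · exact kraft_mcmillan_inequality (hW.uniquelyDecodable hnil)

theorem PrefixFree.campbell_bound {W : Finset (List Bool)} (hW : PrefixFree (W : Set (List Bool)))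
    {q : List Bool → ℝ} (hq : ∀ w ∈ W, 0 ≤ q w) (hq1 : ∑ w ∈ W, q w = 1) {t : ℝ} (ht : 0 < t) :
    (1 + t) / t * logb 2 (∑ w ∈ W, q w ^ (1 / (1 + t)))
      ≤ 1 / t * logb 2 (∑ w ∈ W, q w * (2 : ℝ) ^ (t * (w.length : ℝ))) := by
  set Sα := ∑ w ∈ W, q w ^ (1 / (1 + t))
  set S := ∑ w ∈ W, q w * (2 : ℝ) ^ (t * (w.length : ℝ))
  have hkraft : ∑ w ∈ W, (2 : ℝ) ^ (-(w.length : ℝ)) ≤ 1 := by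
    simpa [rpow_neg, rpow_natCast] using hW.kraft_inequality
  have hSα : 1 ≤ Sα := hq1 ▸ sum_le_sum fun w hw =>
    self_le_rpow_of_le_one (hq w hw) (hq1 ▸ single_le_sum hq hw) (by
      rw [div_le_one (by linarith)]; linarith)
  have hS : 1 ≤ S := hq1 ▸ sum_le_sum fun w hw =>
    le_mul_of_one_le_right (hq w hw) (one_le_rpow (by norm_num) (by positivity))
  have hlog : logb 2 Sα ≤ 1 / (1 + t) * logb 2 S := by
    rw [← logb_rpow_eq_mul_logb_of_pos (by linarith)]
    exact logb_le_logb_of_le (by norm_num) (by linarith)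
      (sum_rpow_le_rpow_sum_mul_rpow_of_kraft two_pos ht hq hkraft)
  calc (1 + t) / t * logb 2 Sα ≤ (1 + t) / t * (1 / (1 + t) * logb 2 S) :=
        mul_le_mul_of_nonneg_left hlog (by positivity)
    _ = 1 / t * logb 2 S := by field_simp

end InformationTheory

theorem lossy_converse_prefix_general {𝒳 𝒴 : Type*} [Fintype 𝒳] [Fintype 𝒴]
    (p : 𝒳 → ℝ) (hp : ∀ x, 0 ≤ p x) (hpsum : ∑ x, p x = 1)
    (d : 𝒳 → 𝒴 → ℝ)
    (D : ℝ) (ε : ℝ)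
    (t : ℝ) (ht : 0 < t)
    (W : Finset (List Bool)) (f : 𝒳 → List Bool → ℝ) (g : List Bool → 𝒴)
    (hprefix : ∀ w ∈ W, ∀ w' ∈ W, w ≠ w' → ¬ w <+: w')
    (hf0 : ∀ x w, 0 ≤ f x w)
    (hf1 : ∀ x, ∑ w ∈ W, f x w = 1)
    (hginj : Set.InjOn g (W : Set (List Bool)))
    (hexcess : (∑ x, p x * ∑ w ∈ W.filter (fun w => D < d x (g w)), f x w) ≤ ε) :
    ∃ Q : 𝒳 → 𝒴 → ℝ,
      (∀ x y, 0 ≤ Q x y) ∧ (∀ x, ∑ y, Q x y = 1) ∧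
      (∑ x, p x * ∑ y ∈ Finset.univ.filter (fun y => D < d x y), Q x y) ≤ ε ∧
      (1 / t) * Real.logb 2
          (∑ x, p x * ∑ w ∈ W, f x w * (2 : ℝ) ^ (t * (w.length : ℝ)))
        ≥ ((1 + t) / t) *
            Real.logb 2 (∑ y, (∑ x, p x * Q x y) ^ (1 / (1 + t))) := by
  classical
  refine ⟨fun x y => ∑ w ∈ W with g w = y, f x w, fun x y => sum_nonneg fun w _ => hf0 x w,
    fun x => (sum_fiberwise W g (f x)).trans (hf1 x), hexcess.trans' (le_of_eq ?_), ?_⟩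
  · refine sum_congr rfl fun x _ => congrArg (p x * ·) ?_
    refine (sum_fiberwise_eq_sum_filter _ _ _ _).trans ?_
    simp only [mem_filter, mem_univ, true_and]
  have houtput : ∀ y, ∑ x, p x * ∑ w ∈ W with g w = y, f x w
      = ∑ w ∈ W with g w = y, ∑ x, p x * f x w :=
    fun y => by simp_rw [mul_sum]; exact sum_comm
  have hmoment : ∑ x, p x * ∑ w ∈ W, f x w * (2 : ℝ) ^ (t * (w.length : ℝ))
      = ∑ w ∈ W, (∑ x, p x * f x w) * (2 : ℝ) ^ (t * (w.length : ℝ)) := by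
    simp_rw [mul_sum, sum_mul, ← mul_assoc]
    exact sum_comm
  have hq1 : ∑ w ∈ W, ∑ x, p x * f x w = 1 := by
    rw [sum_comm]
    simp_rw [← mul_sum, hf1, mul_one, hpsum]
  simp_rw [houtput, sum_comp_sum_fiberwise_of_injOn hginj _ (F := (· ^ (1 / (1 + t))))
    (zero_rpow (one_div_pos.2 (by linarith : (0 : ℝ) < 1 + t)).ne'), hmoment]
  exact InformationTheory.PrefixFree.campbell_bound hprefix
    (fun w _ => sum_nonneg fun x _ => mul_nonneg (hp x) (hf0 x w)) hq1 ht

/-- Prefix-code converse. For any prefix-free code `(f^p, g^p)` with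
decoder injective on the codeword set, excess distortion probability
`P[d(X, g^p(f^p(X))) > D] ≤ ε`, and any `t > 0`,
`(1/t)·log₂ E[2^{t·ℓ(f^p(X))}] ≥ G^{D,ε}_{1/(1+t)}(X)`: there is a feasible
conditional distribution `Q` (with `P[d(X,Y) > D] ≤ ε`) whose output Rényi entropy
of order `1/(1+t)` lower bounds the cumulant generating function. -/
theorem lossy_converse_prefix {𝒳 𝒴 : Type*} [Fintype 𝒳] [Fintype 𝒴] [Nonempty 𝒴]
    (p : 𝒳 → ℝ) (hp : ∀ x, 0 ≤ p x) (hpsum : ∑ x, p x = 1)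
    (d : 𝒳 → 𝒴 → ℝ) (hd : ∀ x y, 0 ≤ d x y)
    (D : ℝ) (hD : 0 ≤ D) (ε : ℝ) (hε0 : 0 ≤ ε) (hε1 : ε < 1)
    (t : ℝ) (ht : 0 < t)
    (W : Finset (List Bool)) (f : 𝒳 → List Bool → ℝ) (g : List Bool → 𝒴)
    (hprefix : ∀ w ∈ W, ∀ w' ∈ W, w ≠ w' → ¬ w <+: w')
    (hf0 : ∀ x w, 0 ≤ f x w)
    (hfW : ∀ x, ∀ w ∉ W, f x w = 0)
    (hf1 : ∀ x, ∑ w ∈ W, f x w = 1)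
    (hginj : Set.InjOn g (W : Set (List Bool)))
    (hexcess : (∑ x, p x * ∑ w ∈ W.filter (fun w => D < d x (g w)), f x w) ≤ ε) :
    ∃ Q : 𝒳 → 𝒴 → ℝ,
      (∀ x y, 0 ≤ Q x y) ∧ (∀ x, ∑ y, Q x y = 1) ∧
      (∑ x, p x * ∑ y ∈ Finset.univ.filter (fun y => D < d x y), Q x y) ≤ ε ∧
      (1 / t) * Real.logb 2
          (∑ x, p x * ∑ w ∈ W, f x w * (2 : ℝ) ^ (t * (w.length : ℝ)))
        ≥ ((1 + t) / t) *
            Real.logb 2 (∑ y, (∑ x, p x * Q x y) ^ (1 / (1 + t))) :=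
  lossy_converse_prefix_general p hp hpsum d D ε t ht W f g hprefix hf0 hf1 hginj hexcess
end
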